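/- Every unitary 2×2 complex matrix U can be written in the form U = e^{iθ} · R_z(α) · H · R_z(β) · H · R_z(γ) for some real numbers θ, α, β, γ ∈ [0, 2π), where H = (1/√2) · [[1, 1], [1, −1]] is the Hadamard matrix and R_z(ω) = [[1, 0], [0, e^{iω}]]. -/

import Mathlib

open Matrix Real

/-- The 2×2 Hadamard matrix `(1/√2) [[1,1],[1,−1]]`. -/
noncomputable def Hadamard : Matrix (Fin 2) (Fin 2) ℂ :=
  ((Real.sqrt 2 : ℂ))⁻¹ • !![1, 1; 1, -1]

/-- The z-rotation gate `R_z(ω) = [[1,0],[0,e^{iω}]]`. -/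
noncomputable def Rz (ω : ℝ) : Matrix (Fin 2) (Fin 2) ℂ :=
  !![1, 0; 0, Complex.exp (Complex.I * ω)]

/-!
A `2 × 2` unitary matrix has the form `[[a, b], [-δ b̄, δ ā]]` with `δ = det U` of modulus one and
`|a|² + |b|² = 1`. Write `|a| = cos t`, `|b| = sin t`, `a = cos t · e^{iθ}`, `b = -i sin t · e^{iφ}`
and `δ = e^{iψ}`. Since `H R_z(2t) H = e^{it} [[cos t, -i sin t], [-i sin t, cos t]]`, the matrix
`e^{i(θ - t)} R_z(α) H R_z(2t) H R_z(γ)` has entries `e^{iθ} cos t`, `-i e^{iθ} sin t e^{iγ}`,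
`-i e^{iθ} sin t e^{iα}` and `e^{iθ} cos t e^{i(α + γ)}`, which are those of `U` for `γ = φ - θ` and
`α = ψ - φ - θ`. Finally every angle may be reduced modulo `2π`.
-/

open Complex ComplexConjugate

lemma exp_I_mul_ofReal_toIcoMod (x : ℝ) :
    exp (I * ↑(toIcoMod two_pi_pos 0 x)) = exp (I * x) := by
  have hper : Function.Periodic (fun x : ℝ => exp (I * x)) (2 * π) := fun x => by
    simpa [mul_comm I] using exp_mul_I_periodic (x : ℂ)
  rw [toIcoMod]
  exact hper.sub_zsmul_eq _

lemma conj_exp_I_mul_ofReal (x : ℝ) : conj (exp (I * x)) = (exp (I * x))⁻¹ := by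
  rw [← exp_conj, map_mul, conj_I, conj_ofReal, neg_mul, Complex.exp_neg]

lemma Real.exists_cos_eq_and_sin_eq {x y : ℝ} (h : x ^ 2 + y ^ 2 = 1) :
    ∃ t : ℝ, Real.cos t = x ∧ Real.sin t = y := by
  obtain ⟨t, ht⟩ := (norm_eq_one_iff (x + y * I)).mp
    (by rw [norm_def, normSq_add_mul_I, h, Real.sqrt_one])
  exact ⟨t, by simpa using congrArg re ht, by simpa using congrArg im ht⟩

lemma Matrix.sum_norm_sq_of_mem_unitaryGroup {𝕜 n : Type*} [RCLike 𝕜] [Fintype n] [DecidableEq n]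
    {U : Matrix n n 𝕜} (hU : U ∈ unitaryGroup n 𝕜) (i : n) : ∑ j, ‖U i j‖ ^ 2 = 1 := by
  have h := congrFun₂ (mem_unitaryGroup_iff.mp hU) i i
  simp only [mul_apply, star_apply, RCLike.star_def, RCLike.mul_conj, one_apply_eq] at h
  exact_mod_cast h

lemma Matrix.eq_of_mem_unitaryGroup_fin_two {R : Type*} [CommRing R] [StarRing R]
    {U : Matrix (Fin 2) (Fin 2) R} (hU : U ∈ unitaryGroup (Fin 2) R) :
    U = !![U 0 0, U 0 1; -U.det * star (U 0 1), U.det * star (U 0 0)] := by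
  have hadj : adjugate U = U.det • star U := calc
    adjugate U = star U * U * adjugate U := by rw [mem_unitaryGroup_iff'.mp hU, one_mul]
    _ = U.det • star U := by rw [mul_assoc, mul_adjugate, mul_smul_comm, mul_one]
  rw [adjugate_fin_two] at hadj
  have h10 : U 1 0 = -U.det * star (U 0 1) := by
    simpa [neg_eq_iff_eq_neg] using congrFun₂ hadj 1 0
  have h11 : U 1 1 = U.det * star (U 0 0) := by
    simpa using congrFun₂ hadj 0 0
  rw [← h10, ← h11]
  exact eta_fin_two U

lemma Rz_toIcoMod (x : ℝ) : Rz (toIcoMod two_pi_pos 0 x) = Rz x := by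
  simp only [Rz, exp_I_mul_ofReal_toIcoMod]

lemma Hadamard_mul_Rz_mul_Hadamard (t : ℝ) :
    Hadamard * Rz (2 * t) * Hadamard =
      exp (I * t) • !![Complex.cos t, -I * Complex.sin t; -I * Complex.sin t, Complex.cos t] := by
  have hsqrt : ((Real.sqrt 2 : ℂ))⁻¹ * ((Real.sqrt 2 : ℂ))⁻¹ = 2⁻¹ := by
    rw [← mul_inv, ← ofReal_mul, Real.mul_self_sqrt zero_le_two, ofReal_ofNat]
  have h2t : exp (I * ↑(2 * t)) = exp (I * t) ^ 2 := by
    rw [← Complex.exp_nat_mul]; push_cast; ring_nf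
  have ht : exp (I * t) = Complex.cos t + Complex.sin t * I := by
    rw [mul_comm, exp_mul_I]
  have hpyth : Complex.cos t ^ 2 + Complex.sin t ^ 2 = 1 := by
    rw [add_comm, Complex.sin_sq_add_cos_sq]
  simp only [Hadamard, Rz, Matrix.smul_mul, Matrix.mul_smul, mul_fin_two, smul_smul, hsqrt, h2t, ht]
  ext i j
  fin_cases i <;> fin_cases j <;>
    simp only [Fin.zero_eta, Fin.mk_one, Matrix.smul_apply, of_apply, cons_val_zero, cons_val_one,
      cons_val_fin_one, smul_eq_mul] <;>
    linear_combination (-1 / 2 : ℂ) * hpyth + Complex.sin t ^ 2 / 2 * I_sq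

lemma Rz_mul_Hadamard_mul_Rz_mul_Hadamard_mul_Rz (α t γ : ℝ) :
    Rz α * Hadamard * Rz (2 * t) * Hadamard * Rz γ =
      exp (I * t) • !![Complex.cos t, -I * Complex.sin t * exp (I * γ);
        -I * Complex.sin t * exp (I * α), Complex.cos t * exp (I * α) * exp (I * γ)] := by
  calc _ = Rz α * (Hadamard * Rz (2 * t) * Hadamard) * Rz γ := by simp only [Matrix.mul_assoc]
    _ = _ := by
      rw [Hadamard_mul_Rz_mul_Hadamard]
      simp only [Rz, Matrix.smul_mul, Matrix.mul_smul, mul_fin_two]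
      congr 1
      ext i j
      fin_cases i <;> fin_cases j <;>
        simp only [Fin.zero_eta, Fin.mk_one, of_apply, cons_val_zero, cons_val_one, cons_val_fin_one] <;>
        ring

lemma exists_eq_exp_smul_Rz_mul_Hadamard_mul_Rz_mul_Hadamard_mul_Rz
    {U : Matrix (Fin 2) (Fin 2) ℂ} (hU : U ∈ unitaryGroup (Fin 2) ℂ) :
    ∃ θ α β γ : ℝ, U = exp (I * θ) • (Rz α * Hadamard * Rz β * Hadamard * Rz γ) := by
  obtain ⟨t, hcos, hsin⟩ := Real.exists_cos_eq_and_sin_eq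
    (by simpa [Fin.sum_univ_two] using sum_norm_sq_of_mem_unitaryGroup hU 0)
  obtain ⟨θ, ha⟩ : ∃ θ : ℝ, U 0 0 = Real.cos t * exp (I * θ) :=
    ⟨arg (U 0 0), by rw [hcos, mul_comm I, norm_mul_exp_arg_mul_I]⟩
  obtain ⟨φ, hb⟩ : ∃ φ : ℝ, U 0 1 = -I * Real.sin t * exp (I * φ) := by
    refine ⟨arg (I * U 0 1), ?_⟩
    have h := norm_mul_exp_arg_mul_I (I * U 0 1)
    rw [norm_mul, norm_I, one_mul, ← hsin, mul_comm _ I] at h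
    linear_combination I * h + U 0 1 * I_sq
  obtain ⟨ψ, hdet⟩ : ∃ ψ : ℝ, U.det = exp (I * ψ) := by
    obtain ⟨ψ, hψ⟩ := (norm_eq_one_iff _).mp (CStarRing.norm_of_mem_unitary (det_of_mem_unitary hU))
    exact ⟨ψ, by rw [← hψ, mul_comm]⟩
  refine ⟨θ - t, ψ - φ - θ, 2 * t, φ - θ, ?_⟩
  rw [Rz_mul_Hadamard_mul_Rz_mul_Hadamard_mul_Rz, smul_smul, eq_of_mem_unitaryGroup_fin_two hU,
    ha, hb, hdet]
  simp only [RCLike.star_def, map_mul, map_neg, conj_ofReal, conj_I, conj_exp_I_mul_ofReal]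
  ext i j
  fin_cases i <;> fin_cases j <;>
    simp only [Fin.zero_eta, Fin.mk_one, Matrix.smul_apply, of_apply, cons_val_zero, cons_val_one,
      cons_val_fin_one, smul_eq_mul, ofReal_sub, mul_sub, Complex.exp_sub, ofReal_cos, ofReal_sin] <;>
    field_simp

/-- **Euler-angle decomposition with Hadamard conjugation.**
Every `2×2` unitary matrix `U` can be written as
`U = e^{iθ} R_z(α) H R_z(β) H R_z(γ)` with `θ, α, β, γ ∈ [0, 2π)`. -/
theorem unitary_decomposition (U : Matrix (Fin 2) (Fin 2) ℂ)
    (hU : U ∈ Matrix.unitaryGroup (Fin 2) ℂ) :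
    ∃ θ α β γ : ℝ,
      θ ∈ Set.Ico (0 : ℝ) (2 * π) ∧ α ∈ Set.Ico (0 : ℝ) (2 * π) ∧
      β ∈ Set.Ico (0 : ℝ) (2 * π) ∧ γ ∈ Set.Ico (0 : ℝ) (2 * π) ∧
      U = Complex.exp (Complex.I * θ) •
        (Rz α * Hadamard * Rz β * Hadamard * Rz γ) := by
  obtain ⟨θ, α, β, γ, hU_eq⟩ := exists_eq_exp_smul_Rz_mul_Hadamard_mul_Rz_mul_Hadamard_mul_Rz hU
  have hmem (x : ℝ) : toIcoMod two_pi_pos 0 x ∈ Set.Ico 0 (2 * π) := by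
    simpa only [zero_add] using toIcoMod_mem_Ico two_pi_pos 0 x
  refine ⟨toIcoMod two_pi_pos 0 θ, toIcoMod two_pi_pos 0 α, toIcoMod two_pi_pos 0 β,
    toIcoMod two_pi_pos 0 γ, hmem θ, hmem α, hmem β, hmem γ, ?_⟩
  rwa [exp_I_mul_ofReal_toIcoMod, Rz_toIcoMod, Rz_toIcoMod, Rz_toIcoMod]
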